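/- In a deterministic MDP, the operator (Ĝ Q)(s₀,a₀) = max_{π∈Π̂} max_{τ∼π} max_{1≤n≤N} [ Σ_{t=0}^{n-1} γ^t r(s_t,a_t) + γ^n max_{a'} Q(s_n,a') ] is a γ-contraction in sup norm and its unique fixed point is Q*. -/

import Mathlib

/-!
The branch `(B^π)^[n-1] ∘ T` of `Ĝ` is a `γ^n`-contraction in sup norm, because the optimality
operator `T` and every expectation operator `B^π` are `γ`-contractions, and a pointwise maximum of
`γ`-contractions is again one; uniqueness of the fixed point follows from `γ < 1`. Since
`B^π Q* ≤ T Q* = Q*` and `B^π` is monotone, every branch of `Ĝ Q*` lies below `Q*`, while the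
branch `n = 1` equals `T Q* = Q*`.
-/

open Finset Filter Topology

/-- Deterministic Bellman optimality operator for a deterministic MDP with transition f. -/
noncomputable def dbOpt {S A : Type*} [Fintype A] [Nonempty A]
    (f : S × A → S) (r : S × A → ℝ) (γ : ℝ) (Q : S × A → ℝ) : S × A → ℝ :=
  fun p => r p + γ * univ.sup' univ_nonempty fun a' => Q (f p, a')

/-- Deterministic Bellman expectation operator for a deterministic policy π. -/
def dbExp {S A : Type*} (f : S × A → S) (r : S × A → ℝ) (γ : ℝ)
    (π : S → A) (Q : S × A → ℝ) : S × A → ℝ :=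
  fun p => r p + γ * Q (f p, π (f p))

/-- Greedy Multi-Step operator for a deterministic MDP:
    Ĝ Q = max_{π ∈ Π̂} max_{1 ≤ n ≤ N} (B^π)^{n-1} B Q (componentwise). -/
noncomputable def dgOp {S A : Type*} [Fintype A] [Nonempty A]
    (f : S × A → S) (r : S × A → ℝ) (γ : ℝ)
    {ι : Type*} [Fintype ι] [Nonempty ι] (pol : ι → S → A)
    (N : ℕ) (hN : 1 ≤ N) (Q : S × A → ℝ) : S × A → ℝ :=
  fun p => univ.sup' univ_nonempty fun i =>
    (Icc 1 N).sup' (nonempty_Icc.mpr hN) fun n =>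
      ((dbExp f r γ (pol i))^[n - 1] (dbOpt f r γ Q)) p

open Function

theorem Finset.abs_sup'_sub_sup'_le {ι α : Type*} [AddCommGroup α] [LinearOrder α]
    [IsOrderedAddMonoid α] {s : Finset ι} (hs : s.Nonempty) {g h : ι → α} {c : α}
    (hgh : ∀ i ∈ s, |g i - h i| ≤ c) : |s.sup' hs g - s.sup' hs h| ≤ c := by
  rw [abs_sub_le_iff]
  constructor
  · rw [sub_le_iff_le_add]
    refine sup'_le hs g fun i hi => ?_
    calc g i ≤ c + h i := sub_le_iff_le_add.mp (abs_sub_le_iff.mp (hgh i hi)).1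
      _ ≤ c + s.sup' hs h := add_le_add_right (le_sup' h hi) c
  · rw [sub_le_iff_le_add]
    refine sup'_le hs h fun i hi => ?_
    calc h i ≤ c + g i := sub_le_iff_le_add.mp (abs_sub_le_iff.mp (hgh i hi)).2
      _ ≤ c + s.sup' hs g := add_le_add_right (le_sup' g hi) c

theorem abs_sub_apply_le_norm_sub {ι : Type*} [Fintype ι] (u v : ι → ℝ) (i : ι) :
    |u i - v i| ≤ ‖u - v‖ := by
  simpa only [Pi.sub_apply, Real.norm_eq_abs] using norm_le_pi_norm (u - v) i

theorem eq_of_isFixedPt_of_norm_sub_le {E : Type*} [NormedAddCommGroup E] {T : E → E} {γ : ℝ}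
    (hγ : γ < 1) (hT : ∀ x y, ‖T x - T y‖ ≤ γ * ‖x - y‖) {x y : E} (hx : IsFixedPt T x)
    (hy : IsFixedPt T y) : x = y := by
  have hle : ‖x - y‖ ≤ γ * ‖x - y‖ := by simpa only [hx.eq, hy.eq] using hT x y
  have hzero : ‖x - y‖ ≤ 0 := by nlinarith [norm_nonneg (x - y)]
  exact sub_eq_zero.mp (norm_le_zero_iff.mp hzero)

section DeterministicMDP

variable {S A : Type*} (f : S × A → S) (r : S × A → ℝ) {γ : ℝ}

theorem norm_dbOpt_sub_le [Fintype S] [Fintype A] [Nonempty A] (hγ : 0 ≤ γ)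
    (q q' : S × A → ℝ) : ‖dbOpt f r γ q - dbOpt f r γ q'‖ ≤ γ * ‖q - q'‖ := by
  refine (pi_norm_le_iff_of_nonneg (by positivity)).mpr fun p => ?_
  have hsup := abs_sup'_sub_sup'_le univ_nonempty fun a _ =>
    abs_sub_apply_le_norm_sub q q' (f p, a)
  simpa only [dbOpt, Pi.sub_apply, Real.norm_eq_abs, add_sub_add_left_eq_sub, ← mul_sub,
    abs_mul, abs_of_nonneg hγ] using mul_le_mul_of_nonneg_left hsup hγ

theorem norm_dbExp_sub_le [Fintype S] [Fintype A] (hγ : 0 ≤ γ) (π : S → A)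
    (u v : S × A → ℝ) : ‖dbExp f r γ π u - dbExp f r γ π v‖ ≤ γ * ‖u - v‖ := by
  refine (pi_norm_le_iff_of_nonneg (by positivity)).mpr fun p => ?_
  simpa only [dbExp, Pi.sub_apply, Real.norm_eq_abs, add_sub_add_left_eq_sub, ← mul_sub,
    abs_mul, abs_of_nonneg hγ] using
    mul_le_mul_of_nonneg_left (abs_sub_apply_le_norm_sub u v (f p, π (f p))) hγ

theorem norm_dbExp_iterate_sub_le [Fintype S] [Fintype A] (hγ : 0 ≤ γ) (π : S → A)
    (u v : S × A → ℝ) (k : ℕ) :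
    ‖(dbExp f r γ π)^[k] u - (dbExp f r γ π)^[k] v‖ ≤ γ ^ k * ‖u - v‖ := by
  induction k with
  | zero => simp
  | succ k ih =>
    rw [iterate_succ_apply', iterate_succ_apply', pow_succ', mul_assoc]
    exact (norm_dbExp_sub_le f r hγ π _ _).trans (mul_le_mul_of_nonneg_left ih hγ)

theorem norm_dgOp_sub_le [Fintype S] [Fintype A] [Nonempty A] {ι : Type*} [Fintype ι]
    [Nonempty ι] (hγ0 : 0 ≤ γ) (hγ1 : γ ≤ 1) (pol : ι → S → A) {N : ℕ} (hN : 1 ≤ N)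
    (q q' : S × A → ℝ) : ‖dgOp f r γ pol N hN q - dgOp f r γ pol N hN q'‖ ≤ γ * ‖q - q'‖ := by
  refine (pi_norm_le_iff_of_nonneg (by positivity)).mpr fun p => ?_
  rw [Pi.sub_apply, Real.norm_eq_abs]
  refine abs_sup'_sub_sup'_le _ fun i _ => abs_sup'_sub_sup'_le _ fun n _ => ?_
  calc _ ≤ ‖(dbExp f r γ (pol i))^[n - 1] (dbOpt f r γ q)
          - (dbExp f r γ (pol i))^[n - 1] (dbOpt f r γ q')‖ := abs_sub_apply_le_norm_sub _ _ p
    _ ≤ γ ^ (n - 1) * ‖dbOpt f r γ q - dbOpt f r γ q'‖ := norm_dbExp_iterate_sub_le f r hγ0 _ _ _ _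
    _ ≤ 1 * (γ * ‖q - q'‖) :=
      mul_le_mul (pow_le_one₀ hγ0 hγ1) (norm_dbOpt_sub_le f r hγ0 q q') (norm_nonneg _) zero_le_one
    _ = γ * ‖q - q'‖ := one_mul _

theorem dbExp_monotone (hγ : 0 ≤ γ) (π : S → A) : Monotone (dbExp f r γ π) :=
  fun _ _ huv p => add_le_add_right (mul_le_mul_of_nonneg_left (huv _) hγ) (r p)

theorem dbExp_le_dbOpt [Fintype A] [Nonempty A] (hγ : 0 ≤ γ) (π : S → A) (Q : S × A → ℝ) :
    dbExp f r γ π Q ≤ dbOpt f r γ Q := fun p =>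
  add_le_add_right (mul_le_mul_of_nonneg_left (le_sup' (fun a => Q (f p, a)) (mem_univ _)) hγ)
    (r p)

theorem dbExp_iterate_le_of_dbOpt_eq [Fintype A] [Nonempty A] (hγ : 0 ≤ γ) {Q : S × A → ℝ}
    (hQ : dbOpt f r γ Q = Q) (π : S → A) (k : ℕ) : (dbExp f r γ π)^[k] Q ≤ Q :=
  (dbExp_monotone f r hγ π).antitone_iterate_of_map_le ((dbExp_le_dbOpt f r hγ π Q).trans_eq hQ)
    (Nat.zero_le k)

theorem dgOp_eq_self_of_dbOpt_eq [Fintype A] [Nonempty A] {ι : Type*} [Fintype ι] [Nonempty ι]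
    (hγ : 0 ≤ γ) (pol : ι → S → A) {N : ℕ} (hN : 1 ≤ N) {Q : S × A → ℝ}
    (hQ : dbOpt f r γ Q = Q) : dgOp f r γ pol N hN Q = Q := by
  funext p
  refine le_antisymm (sup'_le _ _ fun i _ => sup'_le _ _ fun n _ => ?_) ?_
  · rw [hQ]
    exact dbExp_iterate_le_of_dbOpt_eq f r hγ hQ (pol i) (n - 1) p
  · refine le_sup'_of_le _ (mem_univ (Classical.arbitrary ι)) (le_sup'_of_le _
      (mem_Icc.mpr ⟨le_rfl, hN⟩) ?_)
    rw [Nat.sub_self, iterate_zero_apply, hQ]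

end DeterministicMDP

theorem det_greedy_multistep_contraction_and_fixed_point_general
    {S A : Type*} [Fintype S] [Fintype A] [Nonempty A]
    (f : S × A → S) (r : S × A → ℝ) (γ : ℝ) (hγ0 : 0 < γ) (hγ1 : γ < 1)
    {ι : Type*} [Fintype ι] [Nonempty ι] (pol : ι → S → A)
    (N : ℕ) (hN : 1 ≤ N)
    (Qstar : S × A → ℝ) (hQ : dbOpt f r γ Qstar = Qstar) :
    (∀ q q' : S × A → ℝ,
        ‖dgOp f r γ pol N hN q - dgOp f r γ pol N hN q'‖ ≤ γ * ‖q - q'‖) ∧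
      (∀ Q : S × A → ℝ, dgOp f r γ pol N hN Q = Q ↔ Q = Qstar) := by
  have hcontr := norm_dgOp_sub_le f r hγ0.le hγ1.le pol hN
  have hfix := dgOp_eq_self_of_dbOpt_eq f r hγ0.le pol hN hQ
  refine ⟨hcontr, fun Q => ⟨fun hQ' => eq_of_isFixedPt_of_norm_sub_le hγ1 hcontr hQ' hfix, ?_⟩⟩
  rintro rfl
  exact hfix

/-- in a deterministic MDP, the greedy multi-step operator Ĝ is a
    γ-contraction in sup norm and its unique fixed point is Q*. -/
theorem det_greedy_multistep_contraction_and_fixed_point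
    {S A : Type*} [Fintype S] [Fintype A] [Nonempty S] [Nonempty A]
    (f : S × A → S) (r : S × A → ℝ) (γ : ℝ) (hγ0 : 0 < γ) (hγ1 : γ < 1)
    {ι : Type*} [Fintype ι] [Nonempty ι] (pol : ι → S → A)
    (N : ℕ) (hN : 1 ≤ N)
    (Qstar : S × A → ℝ) (hQ : dbOpt f r γ Qstar = Qstar) :
    (∀ q q' : S × A → ℝ,
        ‖dgOp f r γ pol N hN q - dgOp f r γ pol N hN q'‖ ≤ γ * ‖q - q'‖) ∧
      (∀ Q : S × A → ℝ, dgOp f r γ pol N hN Q = Q ↔ Q = Qstar) :=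
  det_greedy_multistep_contraction_and_fixed_point_general f r γ hγ0 hγ1 pol N hN Qstar hQ
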